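/- Let Φ = φ₁ ∧ … ∧ φ_l be a CNF formula over propositional variables p₁, …, p_n in which no clause contains both a positive and a negative occurrence of the same variable. Define the edge-colored directed graph G_Φ as follows: its vertices are a_i, b_i, c_i, d_i for 1 ≤ i ≤ n and e_j, f_j, g_j for 1 ≤ j ≤ l; its P-edges are (a_i, b_i) and (e_j, f_j); its G-edges are (b_i, d_i), (e_j, g_j), and (d_i, e_j) whenever p_i occurs positively in φ_j; its B-edges are (b_i, c_i) and (d_i, e_j) whenever p_i occurs negatively in φ_j. Then Φ is satisfiable if and only if G_Φ has the max-Y-free property. -/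
import Mathlib


/-- The vertices of the edge-colored graph `G_Φ`: `a_i, b_i, c_i, d_i` for each of the
`n` variables and `e_j, f_j, g_j` for each of the `l` clauses. -/
inductive Vtx (n l : ℕ) : Type
  | a (i : Fin n) | b (i : Fin n) | c (i : Fin n) | d (i : Fin n)
  | e (j : Fin l) | f (j : Fin l) | g (j : Fin l)
deriving DecidableEq

/-- The edge-colored directed graph with color classes `P, G, B` has the Y-property:
there are `x, y, z, t` with `(x,y), (y,z), (y,t)` edges such that `(y,z)` and `(y,t)`
have different colors. -/
def HasY {V : Type*} (P G B : Set (V × V)) : Prop :=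
  ∃ x y z t : V, (x, y) ∈ P ∪ G ∪ B ∧
    (((y, z) ∈ P ∧ ((y, t) ∈ G ∨ (y, t) ∈ B)) ∨
     ((y, z) ∈ G ∧ ((y, t) ∈ P ∨ (y, t) ∈ B)) ∨
     ((y, z) ∈ B ∧ ((y, t) ∈ P ∨ (y, t) ∈ G)))

/-- The edge-colored graph `⟨V, E, P, G, B⟩` (with `E = P ∪ G ∪ B`) has the
max-Y-free property: there is `M ⊆ E` with `M ∩ P = ∅` whose induced edge-colored graph
does not have the Y-property and which is maximal under inclusion among subsets of `E`
whose induced edge-colored graph does not have the Y-property. -/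
def MaxYFree {V : Type*} (P G B : Set (V × V)) : Prop :=
  ∃ M ⊆ P ∪ G ∪ B, M ∩ P = ∅ ∧ ¬ HasY (P ∩ M) (G ∩ M) (B ∩ M) ∧
    ∀ M' ⊆ P ∪ G ∪ B, ¬ HasY (P ∩ M') (G ∩ M') (B ∩ M') → M ⊆ M' → M' = M

/-- P-edges of `G_Φ`: `(a_i, b_i)` and `(e_j, f_j)`. -/
def Pedges (n l : ℕ) : Set (Vtx n l × Vtx n l) :=
  {x | (∃ i, x = (.a i, .b i)) ∨ (∃ j, x = (.e j, .f j))}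

/-- G-edges of `G_Φ`: `(b_i, d_i)`, `(e_j, g_j)`, and `(d_i, e_j)` whenever `p_i`
occurs positively in `φ_j`. -/
def Gedges (n l : ℕ) (posIn : Fin n → Fin l → Prop) : Set (Vtx n l × Vtx n l) :=
  {x | (∃ i, x = (.b i, .d i)) ∨ (∃ j, x = (.e j, .g j)) ∨
       (∃ i j, posIn i j ∧ x = (.d i, .e j))}

/-- B-edges of `G_Φ`: `(b_i, c_i)`, and `(d_i, e_j)` whenever `p_i` occurs negatively
in `φ_j`. -/
def Bedges (n l : ℕ) (negIn : Fin n → Fin l → Prop) : Set (Vtx n l × Vtx n l) :=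
  {x | (∃ i, x = (.b i, .c i)) ∨ (∃ i j, negIn i j ∧ x = (.d i, .e j))}

section Aux

variable {n l : ℕ} {posIn negIn : Fin n → Fin l → Prop}

lemma mem_Pedges {u v : Vtx n l} :
    (u, v) ∈ Pedges n l ↔
      (∃ i, u = .a i ∧ v = .b i) ∨ (∃ j, u = .e j ∧ v = .f j) := by
  simp [Pedges]

lemma mem_Gedges {u v : Vtx n l} :
    (u, v) ∈ Gedges n l posIn ↔
      (∃ i, u = .b i ∧ v = .d i) ∨ (∃ j, u = .e j ∧ v = .g j) ∨
      (∃ i j, posIn i j ∧ u = .d i ∧ v = .e j) := by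
  simp [Gedges]

lemma mem_Bedges {u v : Vtx n l} :
    (u, v) ∈ Bedges n l negIn ↔
      (∃ i, u = .b i ∧ v = .c i) ∨ (∃ i j, negIn i j ∧ u = .d i ∧ v = .e j) := by
  simp [Bedges]

lemma mem_inter_insert {α : Type*} {C M : Set α} {w p : α} (h : p ∈ C ∩ insert w M) :
    (p ∈ C ∧ p ∈ M) ∨ (p = w ∧ w ∈ C) := by
  obtain ⟨hC, hM⟩ := h
  rcases Set.mem_insert_iff.mp hM with rfl | hM'
  · exact Or.inr ⟨rfl, hC⟩
  · exact Or.inl ⟨hC, hM'⟩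

end Aux

/-- A CNF formula `Φ` (variables `p_1, …, p_n`, clauses `φ_1, …, φ_l`, no clause
containing both a positive and a negative occurrence of the same variable) is
satisfiable iff the edge-colored graph `G_Φ` has the max-Y-free property. -/
theorem stmt_5 (n l : ℕ) (posIn negIn : Fin n → Fin l → Prop)
    (hnomix : ∀ i j, ¬ (posIn i j ∧ negIn i j)) :
    (∃ σ : Fin n → Bool, ∀ j : Fin l,
        (∃ i, posIn i j ∧ σ i = true) ∨ (∃ i, negIn i j ∧ σ i = false)) ↔
      MaxYFree (Pedges n l) (Gedges n l posIn) (Bedges n l negIn) := by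
  classical
  constructor
  · rintro ⟨σ, hσ⟩
    set τ : Fin n → Bool := fun i =>
      if ∃ j, negIn i j then (if ∃ j, posIn i j then σ i else false) else true with hτdef
    have hτsat : ∀ j : Fin l,
        (∃ i, posIn i j ∧ τ i = true) ∨ (∃ i, negIn i j ∧ τ i = false) := by
      intro j
      rcases hσ j with ⟨i, hp, hb⟩ | ⟨i, hn, hb⟩
      · refine Or.inl ⟨i, hp, ?_⟩
        have hp' : ∃ j', posIn i j' := ⟨j, hp⟩
        by_cases h : ∃ j', negIn i j' <;> simp [hτdef, h, hp', hb]
      · refine Or.inr ⟨i, hn, ?_⟩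
        have hn' : ∃ j', negIn i j' := ⟨j, hn⟩
        by_cases h : ∃ j', posIn i j' <;> simp [hτdef, h, hn', hb]
    have hτpos : ∀ i, (∃ j, posIn i j) → τ i = false → ∃ j', negIn i j' := by
      intro i hp hf
      by_contra hn
      simp [hτdef, hn] at hf
    have hτneg : ∀ i, (∃ j, negIn i j) → τ i = true → ∃ j', posIn i j' := by
      intro i hn ht
      by_contra hp
      simp [hτdef, hn, hp] at ht
    obtain ⟨M, hmem⟩ : ∃ M : Set (Vtx n l × Vtx n l), ∀ u v : Vtx n l,
        ((u, v) ∈ M ↔ ((∃ i, u = .b i ∧ v = .d i) ∨ (∃ i, u = .b i ∧ v = .c i) ∨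
          (∃ j, u = .e j ∧ v = .g j) ∨
          (∃ i j, ((posIn i j ∧ τ i = true) ∨ (negIn i j ∧ τ i = false)) ∧
            u = .d i ∧ v = .e j))) :=
      ⟨{p | (∃ i, p.1 = .b i ∧ p.2 = .d i) ∨ (∃ i, p.1 = .b i ∧ p.2 = .c i) ∨
          (∃ j, p.1 = .e j ∧ p.2 = .g j) ∨
          (∃ i j, ((posIn i j ∧ τ i = true) ∨ (negIn i j ∧ τ i = false)) ∧
            p.1 = .d i ∧ p.2 = .e j)}, fun u v => Iff.rfl⟩
    have hsub : M ⊆ Pedges n l ∪ Gedges n l posIn ∪ Bedges n l negIn := by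
      rintro ⟨u, v⟩ h
      rw [hmem] at h
      rcases h with ⟨i, rfl, rfl⟩ | ⟨i, rfl, rfl⟩ | ⟨j, rfl, rfl⟩ | ⟨i, j, hc, rfl, rfl⟩
      · exact Set.mem_union_left _ (Set.mem_union_right _ (mem_Gedges.mpr (Or.inl ⟨i, rfl, rfl⟩)))
      · exact Set.mem_union_right _ (mem_Bedges.mpr (Or.inl ⟨i, rfl, rfl⟩))
      · exact Set.mem_union_left _
          (Set.mem_union_right _ (mem_Gedges.mpr (Or.inr (Or.inl ⟨j, rfl, rfl⟩))))
      · rcases hc with ⟨hp, _⟩ | ⟨hn, _⟩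
        · exact Set.mem_union_left _
            (Set.mem_union_right _ (mem_Gedges.mpr (Or.inr (Or.inr ⟨i, j, hp, rfl, rfl⟩))))
        · exact Set.mem_union_right _ (mem_Bedges.mpr (Or.inr ⟨i, j, hn, rfl, rfl⟩))
    have hdisj : M ∩ Pedges n l = ∅ := by
      refine Set.eq_empty_iff_forall_notMem.mpr ?_
      rintro ⟨u, v⟩ ⟨h2, h1⟩
      rw [mem_Pedges] at h1
      rw [hmem] at h2
      rcases h1 with ⟨i, rfl, rfl⟩ | ⟨j, rfl, rfl⟩ <;>
        rcases h2 with ⟨i', _, h⟩ | ⟨i', _, h⟩ | ⟨j', _, h⟩ | ⟨i', j', _, _, h⟩ <;> simp at h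
    have hfree : ¬ HasY (Pedges n l ∩ M) (Gedges n l posIn ∩ M) (Bedges n l negIn ∩ M) := by
      rintro ⟨x, y, z, t, hin, hor⟩
      have hP : ∀ u v : Vtx n l, (u, v) ∈ Pedges n l ∩ M → False := by
        rintro u v ⟨h1, h2⟩
        exact Set.eq_empty_iff_forall_notMem.mp hdisj (u, v) ⟨h2, h1⟩
      have hnb : ∀ u : Vtx n l, ∀ i : Fin n, (u, Vtx.b i) ∈ M → False := by
        intro u i h
        rw [hmem] at h
        rcases h with ⟨_, _, h⟩ | ⟨_, _, h⟩ | ⟨_, _, h⟩ | ⟨_, _, _, _, h⟩ <;> simp at h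
      have hGM : ∀ u v : Vtx n l, (u, v) ∈ Gedges n l posIn ∩ M →
          (∃ i, u = Vtx.b i ∧ v = Vtx.d i) ∨ (∃ j, u = Vtx.e j ∧ v = Vtx.g j) ∨
          (∃ i j, posIn i j ∧ τ i = true ∧ u = Vtx.d i ∧ v = Vtx.e j) := by
        rintro u v ⟨h1, h2⟩
        rw [hmem] at h2
        rcases h2 with ⟨i, rfl, rfl⟩ | ⟨i, rfl, rfl⟩ | ⟨j, rfl, rfl⟩ | ⟨i, j, hc, rfl, rfl⟩
        · exact Or.inl ⟨i, rfl, rfl⟩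
        · rcases mem_Gedges.mp h1 with ⟨i', _, h⟩ | ⟨j', h, _⟩ | ⟨i', j', _, h, _⟩ <;> simp at h
        · exact Or.inr (Or.inl ⟨j, rfl, rfl⟩)
        · rcases hc with ⟨hp, ht⟩ | ⟨hn, hf⟩
          · exact Or.inr (Or.inr ⟨i, j, hp, ht, rfl, rfl⟩)
          · rcases mem_Gedges.mp h1 with ⟨i', h, _⟩ | ⟨j', h, _⟩ | ⟨i', j', hp, hu, hv⟩
            · simp at h
            · simp at h
            · injection hu with h1'
              injection hv with h2'
              subst h1'; subst h2'
              exact ((hnomix i j) ⟨hp, hn⟩).elim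
      have hBM : ∀ u v : Vtx n l, (u, v) ∈ Bedges n l negIn ∩ M →
          (∃ i, u = Vtx.b i ∧ v = Vtx.c i) ∨
          (∃ i j, negIn i j ∧ τ i = false ∧ u = Vtx.d i ∧ v = Vtx.e j) := by
        rintro u v ⟨h1, h2⟩
        rw [hmem] at h2
        rcases h2 with ⟨i, rfl, rfl⟩ | ⟨i, rfl, rfl⟩ | ⟨j, rfl, rfl⟩ | ⟨i, j, hc, rfl, rfl⟩
        · rcases mem_Bedges.mp h1 with ⟨i', _, h⟩ | ⟨i', j', _, h, _⟩ <;> simp at h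
        · exact Or.inl ⟨i, rfl, rfl⟩
        · rcases mem_Bedges.mp h1 with ⟨i', h, _⟩ | ⟨i', j', _, h, _⟩ <;> simp at h
        · rcases hc with ⟨hp, ht⟩ | ⟨hn, hf⟩
          · rcases mem_Bedges.mp h1 with ⟨i', h, _⟩ | ⟨i', j', hn', hu, hv⟩
            · simp at h
            · injection hu with h1'
              injection hv with h2'
              subst h1'; subst h2'
              exact ((hnomix i j) ⟨hp, hn'⟩).elim
          · exact Or.inr ⟨i, j, hn, hf, rfl, rfl⟩
      have hinM : (x, y) ∈ M := by
        rcases hin with (hc | hc) | hc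
        exacts [hc.2, hc.2, hc.2]
      rcases hor with ⟨h1, _⟩ | ⟨h1, h2 | h2⟩ | ⟨h1, h2 | h2⟩
      · exact hP y z h1
      · exact hP y t h2
      · rcases hGM y z h1 with ⟨i, rfl, rfl⟩ | ⟨j', rfl, rfl⟩ | ⟨i, j', hp, ht, rfl, rfl⟩
        · exact hnb x i hinM
        · rcases hBM _ t h2 with ⟨i', h, _⟩ | ⟨i', j'', _, _, h, _⟩ <;> simp at h
        · rcases hBM _ t h2 with ⟨i', h, _⟩ | ⟨i', j'', hn, hf, h, _⟩
          · simp at h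
          · injection h with h'
            subst h'
            simp [ht] at hf
      · exact hP y t h2
      · rcases hBM y z h1 with ⟨i, rfl, rfl⟩ | ⟨i, j', hn, hf, rfl, rfl⟩
        · exact hnb x i hinM
        · rcases hGM _ t h2 with ⟨i', h, _⟩ | ⟨j'', h, _⟩ | ⟨i', j'', hp, ht, h, _⟩
          · simp at h
          · simp at h
          · injection h with h'
            subst h'
            simp [ht] at hf
    refine ⟨M, hsub, hdisj, hfree, ?_⟩
    intro M' hM'E hM'Y hMM'
    refine Set.Subset.antisymm (fun w hw => ?_) hMM'
    obtain ⟨u, v⟩ := w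
    have hwE := hM'E hw
    rw [hmem]
    rcases hwE with (hP | hG) | hB
    · exfalso
      rw [mem_Pedges] at hP
      rcases hP with ⟨i, rfl, rfl⟩ | ⟨j, rfl, rfl⟩
      · exact hM'Y ⟨Vtx.a i, Vtx.b i, Vtx.d i, Vtx.c i,
          Set.mem_union_left _ (Set.mem_union_left _
            ⟨mem_Pedges.mpr (Or.inl ⟨i, rfl, rfl⟩), hw⟩),
          Or.inr (Or.inl ⟨⟨mem_Gedges.mpr (Or.inl ⟨i, rfl, rfl⟩),
              hMM' ((hmem _ _).mpr (Or.inl ⟨i, rfl, rfl⟩))⟩,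
            Or.inr ⟨mem_Bedges.mpr (Or.inl ⟨i, rfl, rfl⟩),
              hMM' ((hmem _ _).mpr (Or.inr (Or.inl ⟨i, rfl, rfl⟩)))⟩⟩)⟩
      · rcases hτsat j with ⟨i, hp, ht⟩ | ⟨i, hn, hf⟩
        · exact hM'Y ⟨Vtx.d i, Vtx.e j, Vtx.f j, Vtx.g j,
            Set.mem_union_left _ (Set.mem_union_right _
              ⟨mem_Gedges.mpr (Or.inr (Or.inr ⟨i, j, hp, rfl, rfl⟩)),
                hMM' ((hmem _ _).mpr (Or.inr (Or.inr (Or.inr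
                  ⟨i, j, Or.inl ⟨hp, ht⟩, rfl, rfl⟩))))⟩),
            Or.inl ⟨⟨mem_Pedges.mpr (Or.inr ⟨j, rfl, rfl⟩), hw⟩,
              Or.inl ⟨mem_Gedges.mpr (Or.inr (Or.inl ⟨j, rfl, rfl⟩)),
                hMM' ((hmem _ _).mpr (Or.inr (Or.inr (Or.inl ⟨j, rfl, rfl⟩))))⟩⟩⟩
        · exact hM'Y ⟨Vtx.d i, Vtx.e j, Vtx.f j, Vtx.g j,
            Set.mem_union_right _
              ⟨mem_Bedges.mpr (Or.inr ⟨i, j, hn, rfl, rfl⟩),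
                hMM' ((hmem _ _).mpr (Or.inr (Or.inr (Or.inr
                  ⟨i, j, Or.inr ⟨hn, hf⟩, rfl, rfl⟩))))⟩,
            Or.inl ⟨⟨mem_Pedges.mpr (Or.inr ⟨j, rfl, rfl⟩), hw⟩,
              Or.inl ⟨mem_Gedges.mpr (Or.inr (Or.inl ⟨j, rfl, rfl⟩)),
                hMM' ((hmem _ _).mpr (Or.inr (Or.inr (Or.inl ⟨j, rfl, rfl⟩))))⟩⟩⟩
    · rw [mem_Gedges] at hG
      rcases hG with ⟨i, rfl, rfl⟩ | ⟨j, rfl, rfl⟩ | ⟨i, j, hp, rfl, rfl⟩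
      · exact Or.inl ⟨i, rfl, rfl⟩
      · exact Or.inr (Or.inr (Or.inl ⟨j, rfl, rfl⟩))
      · cases hτi : τ i with
        | true => exact Or.inr (Or.inr (Or.inr ⟨i, j, Or.inl ⟨hp, hτi⟩, rfl, rfl⟩))
        | false =>
          exfalso
          obtain ⟨j', hn'⟩ := hτpos i ⟨j, hp⟩ hτi
          exact hM'Y ⟨Vtx.b i, Vtx.d i, Vtx.e j, Vtx.e j',
            Set.mem_union_left _ (Set.mem_union_right _
              ⟨mem_Gedges.mpr (Or.inl ⟨i, rfl, rfl⟩),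
                hMM' ((hmem _ _).mpr (Or.inl ⟨i, rfl, rfl⟩))⟩),
            Or.inr (Or.inl ⟨⟨mem_Gedges.mpr (Or.inr (Or.inr ⟨i, j, hp, rfl, rfl⟩)), hw⟩,
              Or.inr ⟨mem_Bedges.mpr (Or.inr ⟨i, j', hn', rfl, rfl⟩),
                hMM' ((hmem _ _).mpr (Or.inr (Or.inr (Or.inr
                  ⟨i, j', Or.inr ⟨hn', hτi⟩, rfl, rfl⟩))))⟩⟩)⟩
    · rw [mem_Bedges] at hB
      rcases hB with ⟨i, rfl, rfl⟩ | ⟨i, j, hn, rfl, rfl⟩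
      · exact Or.inr (Or.inl ⟨i, rfl, rfl⟩)
      · cases hτi : τ i with
        | false => exact Or.inr (Or.inr (Or.inr ⟨i, j, Or.inr ⟨hn, hτi⟩, rfl, rfl⟩))
        | true =>
          exfalso
          obtain ⟨j', hp'⟩ := hτneg i ⟨j, hn⟩ hτi
          exact hM'Y ⟨Vtx.b i, Vtx.d i, Vtx.e j', Vtx.e j,
            Set.mem_union_left _ (Set.mem_union_right _
              ⟨mem_Gedges.mpr (Or.inl ⟨i, rfl, rfl⟩),
                hMM' ((hmem _ _).mpr (Or.inl ⟨i, rfl, rfl⟩))⟩),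
            Or.inr (Or.inl ⟨⟨mem_Gedges.mpr (Or.inr (Or.inr ⟨i, j', hp', rfl, rfl⟩)),
                hMM' ((hmem _ _).mpr (Or.inr (Or.inr (Or.inr
                  ⟨i, j', Or.inl ⟨hp', hτi⟩, rfl, rfl⟩))))⟩,
              Or.inr ⟨mem_Bedges.mpr (Or.inr ⟨i, j, hn, rfl, rfl⟩), hw⟩⟩)⟩
  · rintro ⟨M, hME, hMP, hMY, hmax⟩
    have hPM : ∀ w, w ∈ M → w ∉ Pedges n l := fun w hw hP =>
      Set.eq_empty_iff_forall_notMem.mp hMP w ⟨hw, hP⟩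
    have hbd : ∀ i : Fin n, ((Vtx.b i : Vtx n l), Vtx.d i) ∈ M := by
      intro i
      have hwP : ((Vtx.a i : Vtx n l), Vtx.b i) ∈ Pedges n l :=
        mem_Pedges.mpr (Or.inl ⟨i, rfl, rfl⟩)
      have hNY : HasY (Pedges n l ∩ insert (Vtx.a i, Vtx.b i) M)
          (Gedges n l posIn ∩ insert (Vtx.a i, Vtx.b i) M)
          (Bedges n l negIn ∩ insert (Vtx.a i, Vtx.b i) M) := by
        by_contra hY
        have heq := hmax _
          (Set.insert_subset (Set.mem_union_left _ (Set.mem_union_left _ hwP)) hME)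
          hY (Set.subset_insert _ _)
        exact hPM _ (heq ▸ Set.mem_insert _ _) hwP
      obtain ⟨x, y, z, t, hin, hor⟩ := hNY
      have houtP : ∀ v1 v2 : Vtx n l, (y, v1) ∈ Pedges n l ∩ insert (Vtx.a i, Vtx.b i) M →
          ((y, v2) ∈ Gedges n l posIn ∩ insert (Vtx.a i, Vtx.b i) M ∨
           (y, v2) ∈ Bedges n l negIn ∩ insert (Vtx.a i, Vtx.b i) M) → False := by
        intro v1 v2 h1 h2
        rcases mem_inter_insert h1 with ⟨h1P, h1M⟩ | ⟨h1w, -⟩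
        · exact hPM _ h1M h1P
        · injection h1w with hy hv
          subst hy
          rcases h2 with h2 | h2 <;> rcases mem_inter_insert h2 with ⟨h2C, -⟩ | ⟨-, hwC⟩
          · simp [mem_Gedges] at h2C
          · simp [mem_Gedges] at hwC
          · simp [mem_Bedges] at h2C
          · simp [mem_Bedges] at hwC
      have hout : ∀ v1 v2 : Vtx n l,
          (y, v1) ∈ Gedges n l posIn ∩ insert (Vtx.a i, Vtx.b i) M →
          (y, v2) ∈ Bedges n l negIn ∩ insert (Vtx.a i, Vtx.b i) M →
          ((y, v1) ∈ Gedges n l posIn ∧ (y, v1) ∈ M) ∧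
          ((y, v2) ∈ Bedges n l negIn ∧ (y, v2) ∈ M) := by
        intro v1 v2 h1 h2
        rcases mem_inter_insert h1 with h1' | ⟨-, hwC⟩
        · rcases mem_inter_insert h2 with h2' | ⟨-, hwC⟩
          · exact ⟨h1', h2'⟩
          · simp [mem_Bedges] at hwC
        · simp [mem_Gedges] at hwC
      rcases hor with ⟨h1, h2 | h2⟩ | ⟨h1, h2 | h2⟩ | ⟨h1, h2 | h2⟩
      · exact (houtP z t h1 (Or.inl h2)).elim
      · exact (houtP z t h1 (Or.inr h2)).elim
      · exact (houtP t z h2 (Or.inl h1)).elim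
      · obtain ⟨⟨h1G, h1M⟩, h2B, h2M⟩ := hout z t h1 h2
        have hdone : y = Vtx.b i → ((Vtx.b i : Vtx n l), Vtx.d i) ∈ M := by
          intro hy; subst hy
          rcases mem_Gedges.mp h1G with ⟨i', hu, hv⟩ | ⟨j', hu, -⟩ | ⟨i', j', -, hu, -⟩
          · injection hu with h'
            subst h'; subst hv
            exact h1M
          · simp at hu
          · simp at hu
        rcases hin with (hc | hc) | hc <;>
          rcases mem_inter_insert hc with ⟨hcC, hcM⟩ | ⟨hcw, -⟩
        · exact (hMY ⟨x, y, z, t, Set.mem_union_left _ (Set.mem_union_left _ ⟨hcC, hcM⟩),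
            Or.inr (Or.inl ⟨⟨h1G, h1M⟩, Or.inr ⟨h2B, h2M⟩⟩)⟩).elim
        · exact hdone (congrArg Prod.snd hcw)
        · exact (hMY ⟨x, y, z, t, Set.mem_union_left _ (Set.mem_union_right _ ⟨hcC, hcM⟩),
            Or.inr (Or.inl ⟨⟨h1G, h1M⟩, Or.inr ⟨h2B, h2M⟩⟩)⟩).elim
        · exact hdone (congrArg Prod.snd hcw)
        · exact (hMY ⟨x, y, z, t, Set.mem_union_right _ ⟨hcC, hcM⟩,
            Or.inr (Or.inl ⟨⟨h1G, h1M⟩, Or.inr ⟨h2B, h2M⟩⟩)⟩).elim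
        · exact hdone (congrArg Prod.snd hcw)
      · exact (houtP t z h2 (Or.inr h1)).elim
      · obtain ⟨⟨h2G, h2M⟩, h1B, h1M⟩ := hout t z h2 h1
        have hdone : y = Vtx.b i → ((Vtx.b i : Vtx n l), Vtx.d i) ∈ M := by
          intro hy; subst hy
          rcases mem_Gedges.mp h2G with ⟨i', hu, hv⟩ | ⟨j', hu, -⟩ | ⟨i', j', -, hu, -⟩
          · injection hu with h'
            subst h'; subst hv
            exact h2M
          · simp at hu
          · simp at hu
        rcases hin with (hc | hc) | hc <;>
          rcases mem_inter_insert hc with ⟨hcC, hcM⟩ | ⟨hcw, -⟩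
        · exact (hMY ⟨x, y, z, t, Set.mem_union_left _ (Set.mem_union_left _ ⟨hcC, hcM⟩),
            Or.inr (Or.inr ⟨⟨h1B, h1M⟩, Or.inr ⟨h2G, h2M⟩⟩)⟩).elim
        · exact hdone (congrArg Prod.snd hcw)
        · exact (hMY ⟨x, y, z, t, Set.mem_union_left _ (Set.mem_union_right _ ⟨hcC, hcM⟩),
            Or.inr (Or.inr ⟨⟨h1B, h1M⟩, Or.inr ⟨h2G, h2M⟩⟩)⟩).elim
        · exact hdone (congrArg Prod.snd hcw)
        · exact (hMY ⟨x, y, z, t, Set.mem_union_right _ ⟨hcC, hcM⟩,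
            Or.inr (Or.inr ⟨⟨h1B, h1M⟩, Or.inr ⟨h2G, h2M⟩⟩)⟩).elim
        · exact hdone (congrArg Prod.snd hcw)
    have hclause : ∀ j : Fin l, ∃ i, (posIn i j ∨ negIn i j) ∧
        ((Vtx.d i : Vtx n l), Vtx.e j) ∈ M := by
      intro j
      have hwP : ((Vtx.e j : Vtx n l), Vtx.f j) ∈ Pedges n l :=
        mem_Pedges.mpr (Or.inr ⟨j, rfl, rfl⟩)
      have hNY : HasY (Pedges n l ∩ insert (Vtx.e j, Vtx.f j) M)
          (Gedges n l posIn ∩ insert (Vtx.e j, Vtx.f j) M)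
          (Bedges n l negIn ∩ insert (Vtx.e j, Vtx.f j) M) := by
        by_contra hY
        have heq := hmax _
          (Set.insert_subset (Set.mem_union_left _ (Set.mem_union_left _ hwP)) hME)
          hY (Set.subset_insert _ _)
        exact hPM _ (heq ▸ Set.mem_insert _ _) hwP
      obtain ⟨x, y, z, t, hin, hor⟩ := hNY
      have hkey : y = Vtx.e j → ∃ i, (posIn i j ∨ negIn i j) ∧
          ((Vtx.d i : Vtx n l), Vtx.e j) ∈ M := by
        intro hy; subst hy
        rcases hin with (hc | hc) | hc <;>
          rcases mem_inter_insert hc with ⟨hcC, hcM⟩ | ⟨hcw, -⟩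
        · exact (hPM _ hcM hcC).elim
        · exact absurd (congrArg Prod.snd hcw) (by simp)
        · rcases mem_Gedges.mp hcC with ⟨i', -, hv⟩ | ⟨j', -, hv⟩ | ⟨i', j', hp, hu, hv⟩
          · simp at hv
          · simp at hv
          · injection hv with h'
            subst h'; subst hu
            exact ⟨i', Or.inl hp, hcM⟩
        · exact absurd (congrArg Prod.snd hcw) (by simp)
        · rcases mem_Bedges.mp hcC with ⟨i', -, hv⟩ | ⟨i', j', hn, hu, hv⟩
          · simp at hv
          · injection hv with h'
            subst h'; subst hu
            exact ⟨i', Or.inr hn, hcM⟩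
        · exact absurd (congrArg Prod.snd hcw) (by simp)
      rcases hor with ⟨h1, h2 | h2⟩ | ⟨h1, h2 | h2⟩ | ⟨h1, h2 | h2⟩
      · rcases mem_inter_insert h1 with ⟨h1P, h1M⟩ | ⟨h1w, -⟩
        · exact (hPM _ h1M h1P).elim
        · exact hkey (congrArg Prod.fst h1w)
      · rcases mem_inter_insert h1 with ⟨h1P, h1M⟩ | ⟨h1w, -⟩
        · exact (hPM _ h1M h1P).elim
        · exact hkey (congrArg Prod.fst h1w)
      · rcases mem_inter_insert h2 with ⟨h2P, h2M⟩ | ⟨h2w, -⟩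
        · exact (hPM _ h2M h2P).elim
        · exact hkey (congrArg Prod.fst h2w)
      · rcases mem_inter_insert h1 with ⟨h1G, h1M⟩ | ⟨-, hwC⟩
        · rcases mem_inter_insert h2 with ⟨h2B, h2M⟩ | ⟨-, hwC⟩
          · rcases hin with (hc | hc) | hc <;>
              rcases mem_inter_insert hc with ⟨hcC, hcM⟩ | ⟨hcw, -⟩
            · exact (hMY ⟨x, y, z, t,
                Set.mem_union_left _ (Set.mem_union_left _ ⟨hcC, hcM⟩),
                Or.inr (Or.inl ⟨⟨h1G, h1M⟩, Or.inr ⟨h2B, h2M⟩⟩)⟩).elim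
            · exfalso
              have hy : y = Vtx.f j := congrArg Prod.snd hcw
              subst hy
              simp [mem_Gedges] at h1G
            · exact (hMY ⟨x, y, z, t,
                Set.mem_union_left _ (Set.mem_union_right _ ⟨hcC, hcM⟩),
                Or.inr (Or.inl ⟨⟨h1G, h1M⟩, Or.inr ⟨h2B, h2M⟩⟩)⟩).elim
            · exfalso
              have hy : y = Vtx.f j := congrArg Prod.snd hcw
              subst hy
              simp [mem_Gedges] at h1G
            · exact (hMY ⟨x, y, z, t, Set.mem_union_right _ ⟨hcC, hcM⟩,
                Or.inr (Or.inl ⟨⟨h1G, h1M⟩, Or.inr ⟨h2B, h2M⟩⟩)⟩).elim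
            · exfalso
              have hy : y = Vtx.f j := congrArg Prod.snd hcw
              subst hy
              simp [mem_Gedges] at h1G
          · exact (by simp [mem_Bedges] at hwC : False).elim
        · exact (by simp [mem_Gedges] at hwC : False).elim
      · rcases mem_inter_insert h2 with ⟨h2P, h2M⟩ | ⟨h2w, -⟩
        · exact (hPM _ h2M h2P).elim
        · exact hkey (congrArg Prod.fst h2w)
      · rcases mem_inter_insert h1 with ⟨h1B, h1M⟩ | ⟨-, hwC⟩
        · rcases mem_inter_insert h2 with ⟨h2G, h2M⟩ | ⟨-, hwC⟩
          · rcases hin with (hc | hc) | hc <;>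
              rcases mem_inter_insert hc with ⟨hcC, hcM⟩ | ⟨hcw, -⟩
            · exact (hMY ⟨x, y, z, t,
                Set.mem_union_left _ (Set.mem_union_left _ ⟨hcC, hcM⟩),
                Or.inr (Or.inr ⟨⟨h1B, h1M⟩, Or.inr ⟨h2G, h2M⟩⟩)⟩).elim
            · exfalso
              have hy : y = Vtx.f j := congrArg Prod.snd hcw
              subst hy
              simp [mem_Gedges] at h2G
            · exact (hMY ⟨x, y, z, t,
                Set.mem_union_left _ (Set.mem_union_right _ ⟨hcC, hcM⟩),
                Or.inr (Or.inr ⟨⟨h1B, h1M⟩, Or.inr ⟨h2G, h2M⟩⟩)⟩).elim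
            · exfalso
              have hy : y = Vtx.f j := congrArg Prod.snd hcw
              subst hy
              simp [mem_Gedges] at h2G
            · exact (hMY ⟨x, y, z, t, Set.mem_union_right _ ⟨hcC, hcM⟩,
                Or.inr (Or.inr ⟨⟨h1B, h1M⟩, Or.inr ⟨h2G, h2M⟩⟩)⟩).elim
            · exfalso
              have hy : y = Vtx.f j := congrArg Prod.snd hcw
              subst hy
              simp [mem_Gedges] at h2G
          · exact (by simp [mem_Gedges] at hwC : False).elim
        · exact (by simp [mem_Bedges] at hwC : False).elim
    refine ⟨fun i => if ∃ j, posIn i j ∧ (Vtx.d i, Vtx.e j) ∈ M then true else false, ?_⟩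
    intro j
    obtain ⟨i, hpn, hde⟩ := hclause j
    rcases hpn with hp | hn
    · exact Or.inl ⟨i, hp, if_pos ⟨j, hp, hde⟩⟩
    · refine Or.inr ⟨i, hn, ?_⟩
      refine if_neg ?_
      rintro ⟨j', hp', hde'⟩
      exact hMY ⟨Vtx.b i, Vtx.d i, Vtx.e j', Vtx.e j,
        Set.mem_union_left _ (Set.mem_union_right _
          ⟨mem_Gedges.mpr (Or.inl ⟨i, rfl, rfl⟩), hbd i⟩),
        Or.inr (Or.inl ⟨⟨mem_Gedges.mpr (Or.inr (Or.inr ⟨i, j', hp', rfl, rfl⟩)), hde'⟩,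
          Or.inr ⟨mem_Bedges.mpr (Or.inr ⟨i, j, hn, rfl, rfl⟩), hde⟩⟩)⟩
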